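/- Let a binary tree be decomposed into node-disjoint micro trees such that if a micro tree has two outgoing edges toward children of micro-tree nodes other than via a single node, then the micro tree consists of a single node, and such that each micro tree has at most one outgoing edge apart from those from a single node micro tree. Then each micro tree corresponds to at most two intervals of the BP encoding of the original tree. -/
import Mathlib


/-- A binary tree: `leaf` is the empty tree; each internal node has an
optional left and an optional right subtree (possibly `leaf`). -/
inductive BinTree : Type where
  | leaf : BinTree
  | node : BinTree → BinTree → BinTree
deriving DecidableEq

namespace BinTree

/-- Number of nodes of a binary tree. -/
def size : BinTree → ℕ
  | leaf => 0
  | node l r => l.size + r.size + 1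

/-- BalancedBP-parenthesis encoding of binary trees:
`BP(empty) = ε`, `BP(t) = '(' ++ BP(t_l) ++ ')' ++ BP(t_r)`.
`true` is an opening parenthesis, `false` a closing one. -/
def bp : BinTree → List Bool
  | leaf => []
  | node l r => true :: (l.bp ++ false :: r.bp)

/-- The subtree reached by following a path (`false` = left, `true` = right). -/
def subtreeAt : BinTree → List Bool → Option BinTree
  | t, [] => some t
  | leaf, _ :: _ => none
  | node l _, false :: p => subtreeAt l p
  | node _ r, true :: p => subtreeAt r p

/-- A path identifies an actual node of the tree (not an empty slot). -/
def ValidPath (t : BinTree) (p : List Bool) : Prop :=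
  ∃ l r, subtreeAt t p = some (node l r)

/-- Index (0-based) of the opening parenthesis of the node at a path. -/
def openIdx : BinTree → List Bool → Option ℕ
  | leaf, _ => none
  | node _ _, [] => some 0
  | node l _, false :: p => (openIdx l p).map (· + 1)
  | node l r, true :: p => (openIdx r p).map (· + (l.bp.length + 2))

/-- Index (0-based) of the closing parenthesis of the node at a path. -/
def closeIdx : BinTree → List Bool → Option ℕ
  | leaf, _ => none
  | node l _, [] => some (l.bp.length + 1)
  | node l _, false :: p => (closeIdx l p).map (· + 1)
  | node l r, true :: p => (closeIdx r p).map (· + (l.bp.length + 2))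

/-- Inorder rank (0-based) of the node at a path. -/
def inorderIdx : BinTree → List Bool → Option ℕ
  | leaf, _ => none
  | node l _, [] => some l.size
  | node l _, false :: p => inorderIdx l p
  | node l r, true :: p => (inorderIdx r p).map (· + (l.size + 1))

end BinTree

/-- A sequence of parentheses (`true` = '(') is balanced: equally many opening
and closing parentheses, and every prefix has at least as many opening ones. -/
def BalancedBP (s : List Bool) : Prop :=
  s.count true = s.count false ∧
  ∀ k, (s.take k).count false ≤ (s.take k).count true

/-- `excess s k`: number of opening minus closing parentheses among the first `k` symbols. -/
def excess (s : List Bool) (k : ℕ) : ℤ :=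
  ((s.take k).count true : ℤ) - ((s.take k).count false : ℤ)

/-- `IsMatch s i j`: positions `i < j` form a matching pair of parentheses
(the standard stack-based matching). -/
def IsMatch (s : List Bool) (i j : ℕ) : Prop :=
  i < j ∧ j < s.length ∧ s[i]? = some true ∧ s[j]? = some false ∧
  excess s (j + 1) = excess s i ∧
  ∀ k, i < k → k ≤ j → excess s i < excess s k

/-- `EnclosePair s i v j`: `j` is the closing parenthesis whose matching pair
tightly encloses the matching pair `(i, v)`. -/
def EnclosePair (s : List Bool) (i v j : ℕ) : Prop :=
  (∃ i', IsMatch s i' j ∧ i' < i ∧ v < j) ∧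
  ∀ i'' j'', IsMatch s i'' j'' → i'' < i → v < j'' → j ≤ j''

/-- Longest common prefix of two paths. -/
def lcp : List Bool → List Bool → List Bool
  | a :: as, b :: bs => if a = b then a :: lcp as bs else []
  | _, _ => []

/-- `M` is a micro tree of `t`: a nonempty, connected set of nodes of `t`
closed between its root and each of its members. -/
def IsMicroTree (t : BinTree) (M : Set (List Bool)) : Prop :=
  M.Nonempty ∧ (∀ p ∈ M, BinTree.ValidPath t p) ∧
  ∃ r ∈ M, ∀ p ∈ M, r <+: p ∧ ∀ q, r <+: q → q <+: p → BinTree.ValidPath t q → q ∈ M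

/-- Outgoing edges of `M` towards children: nodes of `t` outside `M` whose parent is in `M`. -/
def childEdges (t : BinTree) (M : Set (List Bool)) : Set (List Bool) :=
  {q | q ∉ M ∧ BinTree.ValidPath t q ∧ ∃ p ∈ M, ∃ b, q = p ++ [b]}

/-- The set of BP positions (opening and closing parentheses) of the nodes of `M`. -/
def bpPositions (t : BinTree) (M : Set (List Bool)) : Set ℕ :=
  {k | ∃ p ∈ M, BinTree.openIdx t p = some k ∨ BinTree.closeIdx t p = some k}

section Aux

open BinTree

lemma bp_length (t : BinTree) : t.bp.length = 2 * t.size := by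
  induction t with
  | leaf => simp [bp, size]
  | node l r ihl ihr => simp [bp, size, ihl, ihr]; omega

lemma subtreeAt_append (t : BinTree) (p q : List Bool) :
    subtreeAt t (p ++ q) = (subtreeAt t p).bind (fun s => subtreeAt s q) := by
  induction p generalizing t with
  | nil => simp [subtreeAt]
  | cons b p ih =>
    cases t with
    | leaf => simp [subtreeAt]
    | node l r => cases b <;> simp [subtreeAt, ih]

lemma validPath_of_prefix {t : BinTree} {p q : List Bool} (h : BinTree.ValidPath t q)
    (hp : p <+: q) : BinTree.ValidPath t p := by
  obtain ⟨e, rfl⟩ := hp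
  obtain ⟨l, r, h⟩ := h
  rw [subtreeAt_append] at h
  cases hs : subtreeAt t p with
  | none => rw [hs] at h; simp at h
  | some s =>
    rw [hs] at h; simp at h
    cases s with
    | leaf =>
      cases e with
      | nil => simp [subtreeAt] at h
      | cons b e => simp [subtreeAt] at h
    | node a b => exact ⟨a, b, hs⟩

lemma length_add_size_le {t : BinTree} {p : List Bool} {s : BinTree}
    (h : subtreeAt t p = some s) : p.length + s.size ≤ t.size := by
  induction p generalizing t with
  | nil => simp [subtreeAt] at h; subst h; simp
  | cons b p ih =>
    cases t with
    | leaf => simp [subtreeAt] at h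
    | node l r =>
      cases b <;> simp only [subtreeAt] at h
      · have := ih h; simp [size]; omega
      · have := ih h; simp [size]; omega

lemma finite_validPaths (t : BinTree) : {p : List Bool | BinTree.ValidPath t p}.Finite := by
  apply Set.Finite.subset (List.finite_length_le Bool t.size)
  rintro p ⟨l, r, h⟩
  have := length_add_size_le h
  simp only [Set.mem_setOf_eq]
  omega

lemma shift {t : BinTree} {p : List Bool} {l r : BinTree}
    (h : subtreeAt t p = some (node l r)) :
    ∃ o, openIdx t p = some o ∧ ∀ e,
      openIdx t (p ++ e) = (openIdx (node l r) e).map (· + o) ∧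
      closeIdx t (p ++ e) = (closeIdx (node l r) e).map (· + o) := by
  induction p generalizing t with
  | nil =>
    simp [subtreeAt] at h; subst h
    refine ⟨0, rfl, fun e => ⟨?_, ?_⟩⟩ <;>
      [cases he : openIdx (node l r) e; cases he : closeIdx (node l r) e] <;> simp [he]
  | cons b p ih =>
    cases t with
    | leaf => simp [subtreeAt] at h
    | node l' r' =>
      cases b with
      | false =>
        simp only [subtreeAt] at h
        obtain ⟨o, ho, he⟩ := ih h
        refine ⟨o + 1, by simp [openIdx, ho], fun e => ⟨?_, ?_⟩⟩
        · have h1 := (he e).1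
          show (openIdx l' (p ++ e)).map (· + 1) = _
          rw [h1]
          cases h2 : openIdx (node l r) e <;> simp [h2] <;> omega
        · have h1 := (he e).2
          show (closeIdx l' (p ++ e)).map (· + 1) = _
          rw [h1]
          cases h2 : closeIdx (node l r) e <;> simp [h2] <;> omega
      | true =>
        simp only [subtreeAt] at h
        obtain ⟨o, ho, he⟩ := ih h
        refine ⟨o + (l'.bp.length + 2), by simp [openIdx, ho], fun e => ⟨?_, ?_⟩⟩
        · have h1 := (he e).1
          show (openIdx r' (p ++ e)).map (· + (l'.bp.length + 2)) = _
          rw [h1]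
          cases h2 : openIdx (node l r) e <;> simp [h2] <;> omega
        · have h1 := (he e).2
          show (closeIdx r' (p ++ e)).map (· + (l'.bp.length + 2)) = _
          rw [h1]
          cases h2 : closeIdx (node l r) e <;> simp [h2] <;> omega

lemma idx_lt {t : BinTree} {p : List Bool} {k : ℕ}
    (h : openIdx t p = some k ∨ closeIdx t p = some k) : k < 2 * t.size := by
  induction t generalizing p k with
  | leaf => simp [openIdx, closeIdx] at h
  | node l r ihl ihr =>
    cases p with
    | nil =>
      simp only [openIdx, closeIdx, Option.some_inj, bp_length] at h
      rcases h with h | h <;> simp [size] <;> omega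
    | cons b p =>
      cases b with
      | false =>
        simp only [openIdx, closeIdx, Option.map_eq_some_iff] at h
        rcases h with ⟨a, ha, hk⟩ | ⟨a, ha, hk⟩ <;>
          [have := ihl (Or.inl ha); have := ihl (Or.inr ha)] <;> simp [size] <;> omega
      | true =>
        simp only [openIdx, closeIdx, Option.map_eq_some_iff, bp_length] at h
        rcases h with ⟨a, ha, hk⟩ | ⟨a, ha, hk⟩ <;>
          [have := ihr (Or.inl ha); have := ihr (Or.inr ha)] <;> simp [size] <;> omega

lemma idx_surj (t : BinTree) {k : ℕ} (hk : k < 2 * t.size) :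
    ∃ p, BinTree.ValidPath t p ∧ (openIdx t p = some k ∨ closeIdx t p = some k) := by
  induction t generalizing k with
  | leaf => simp [size] at hk
  | node l r ihl ihr =>
    rcases Nat.lt_or_ge k (2 * l.size + 2) with hk1 | hk1
    · rcases Nat.eq_zero_or_pos k with rfl | hk0
      · exact ⟨[], ⟨l, r, rfl⟩, Or.inl rfl⟩
      rcases Nat.lt_or_ge k (2 * l.size + 1) with hk2 | hk2
      · obtain ⟨p, hv, hidx⟩ := ihl (show k - 1 < 2 * l.size by omega)
        refine ⟨false :: p, ?_, ?_⟩
        · obtain ⟨a, b, hab⟩ := hv; exact ⟨a, b, by simpa [subtreeAt] using hab⟩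
        · rcases hidx with h | h
          · exact Or.inl (by simp [openIdx, h]; omega)
          · exact Or.inr (by simp [closeIdx, h]; omega)
      · have : k = 2 * l.size + 1 := by omega
        exact ⟨[], ⟨l, r, rfl⟩, Or.inr (by simp [closeIdx, bp_length, this])⟩
    · obtain ⟨p, hv, hidx⟩ := ihr (show k - (2 * l.size + 2) < 2 * r.size by
        simp [size] at hk; omega)
      refine ⟨true :: p, ?_, ?_⟩
      · obtain ⟨a, b, hab⟩ := hv; exact ⟨a, b, by simpa [subtreeAt] using hab⟩
      · rcases hidx with h | h
        · exact Or.inl (by simp [openIdx, h, bp_length]; omega)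
        · exact Or.inr (by simp [closeIdx, h, bp_length]; omega)

lemma idx_inj {t : BinTree} {p q : List Bool} {k : ℕ}
    (hp : openIdx t p = some k ∨ closeIdx t p = some k)
    (hq : openIdx t q = some k ∨ closeIdx t q = some k) : p = q := by
  induction t generalizing p q k with
  | leaf => simp [openIdx, closeIdx] at hp
  | node l r ihl ihr =>
    have key : ∀ u : List Bool, (openIdx (node l r) u = some k ∨ closeIdx (node l r) u = some k) →
        (u = [] ∧ (k = 0 ∨ k = 2 * l.size + 1)) ∨
        (∃ u' a, u = false :: u' ∧ (openIdx l u' = some a ∨ closeIdx l u' = some a) ∧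
          k = a + 1 ∧ a < 2 * l.size) ∨
        (∃ u' a, u = true :: u' ∧ (openIdx r u' = some a ∨ closeIdx r u' = some a) ∧
          k = a + (2 * l.size + 2) ∧ a < 2 * r.size) := by
      rintro (_ | ⟨b, u⟩) h
      · left
        refine ⟨rfl, ?_⟩
        simp only [openIdx, closeIdx, Option.some_inj, bp_length] at h
        omega
      · cases b with
        | false =>
          right; left
          simp only [openIdx, closeIdx, Option.map_eq_some_iff] at h
          rcases h with ⟨a, ha, hk⟩ | ⟨a, ha, hk⟩
          · exact ⟨u, a, rfl, Or.inl ha, by omega, idx_lt (Or.inl ha)⟩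
          · exact ⟨u, a, rfl, Or.inr ha, by omega, idx_lt (Or.inr ha)⟩
        | true =>
          right; right
          simp only [openIdx, closeIdx, Option.map_eq_some_iff, bp_length] at h
          rcases h with ⟨a, ha, hk⟩ | ⟨a, ha, hk⟩
          · exact ⟨u, a, rfl, Or.inl ha, by omega, idx_lt (Or.inl ha)⟩
          · exact ⟨u, a, rfl, Or.inr ha, by omega, idx_lt (Or.inr ha)⟩
    rcases key p hp with ⟨rfl, hkp⟩ | ⟨p', a, rfl, hap, hka, haL⟩ | ⟨p', a, rfl, hap, hka, haL⟩ <;>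
      rcases key q hq with ⟨rfl, hkq⟩ | ⟨q', a', rfl, haq, hka', haL'⟩ | ⟨q', a', rfl, haq, hka', haL'⟩
    · rfl
    · omega
    · omega
    · omega
    · have : a = a' := by omega
      subst this
      rw [ihl hap haq]
    · omega
    · omega
    · omega
    · have : a = a' := by omega
      subst this
      rw [ihr hap haq]

lemma pos_full {t : BinTree} {p : List Bool} {l r : BinTree} {o : ℕ}
    (hs : subtreeAt t p = some (node l r)) (ho : openIdx t p = some o) {k : ℕ} :
    (∃ q, p <+: q ∧ BinTree.ValidPath t q ∧
        (openIdx t q = some k ∨ closeIdx t q = some k)) ↔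
      o ≤ k ∧ k < o + 2 * (node l r).size := by
  obtain ⟨o', ho', hsh⟩ := shift hs
  rw [ho] at ho'
  injection ho' with ho'
  subst ho'
  have hvalid : ∀ e, BinTree.ValidPath t (p ++ e) ↔ BinTree.ValidPath (node l r) e := by
    intro e
    unfold BinTree.ValidPath
    rw [subtreeAt_append, hs]
    simp
  constructor
  · rintro ⟨q, ⟨e, rfl⟩, hv, hidx⟩
    have h1 := (hsh e).1
    have h2 := (hsh e).2
    rcases hidx with h | h
    · rw [h1, Option.map_eq_some_iff] at h
      obtain ⟨a, ha, hk⟩ := h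
      have := idx_lt (Or.inl ha)
      omega
    · rw [h2, Option.map_eq_some_iff] at h
      obtain ⟨a, ha, hk⟩ := h
      have := idx_lt (Or.inr ha)
      omega
  · rintro ⟨hk1, hk2⟩
    obtain ⟨e, hv, hidx⟩ := idx_surj (node l r) (show k - o < 2 * (node l r).size by omega)
    refine ⟨p ++ e, ⟨e, rfl⟩, (hvalid e).mpr hv, ?_⟩
    rcases hidx with h | h
    · exact Or.inl (by rw [(hsh e).1, h]; simp; omega)
    · exact Or.inr (by rw [(hsh e).2, h]; simp; omega)

lemma ico_diff (a b c d : ℕ) (h1 : a ≤ c) (h2 : d ≤ b) (h3 : c ≤ d) :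
    Set.Ico a b \ Set.Ico c d = Set.Ico a c ∪ Set.Ico d b := by
  ext k
  simp only [Set.mem_diff, Set.mem_Ico, Set.mem_union, not_and, not_lt]
  omega

end Aux

/-- under the Farzan--Munro conditions (a micro tree with two or
more outgoing child edges is a single node), each micro tree corresponds to at
most two intervals of the BP encoding of the whole tree. -/
theorem microTree_at_most_two_intervals (t : BinTree) (M : Set (List Bool))
    (hM : IsMicroTree t M)
    (hsingle : 2 ≤ (childEdges t M).ncard → ∃ p, M = {p}) :
    ∃ a b c d : ℕ, bpPositions t M = Set.Ico a b ∪ Set.Ico c d := by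
  classical
  obtain ⟨hne, hvalid, rt, hrM, hroot⟩ := hM
  by_cases h2 : 2 ≤ (childEdges t M).ncard
  · obtain ⟨p, rfl⟩ := hsingle h2
    have hv : BinTree.ValidPath t p := hvalid p rfl
    obtain ⟨l, r, hs⟩ := hv
    obtain ⟨o, ho, hsh⟩ := shift hs
    have hc : BinTree.closeIdx t p = some (l.bp.length + 1 + o) := by
      have := (hsh []).2
      simpa [BinTree.closeIdx] using this
    refine ⟨o, o + 1, l.bp.length + 1 + o, l.bp.length + 2 + o, ?_⟩
    ext k
    simp only [bpPositions, Set.mem_setOf_eq, Set.mem_singleton_iff, Set.mem_union, Set.mem_Ico]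
    constructor
    · rintro ⟨q, rfl, hidx⟩
      rcases hidx with h | h
      · rw [ho] at h; injection h with h; omega
      · rw [hc] at h; injection h with h; omega
    · rintro (⟨h1, h2⟩ | ⟨h1, h2⟩)
      · have : k = o := by omega
        exact ⟨p, rfl, Or.inl (this ▸ ho)⟩
      · have : k = l.bp.length + 1 + o := by omega
        exact ⟨p, rfl, Or.inr (this ▸ hc)⟩
  · push_neg at h2
    have hfin : (childEdges t M).Finite := (finite_validPaths t).subset (fun q hq => hq.2.1)
    have hvrt : BinTree.ValidPath t rt := hvalid rt hrM
    obtain ⟨l, r, hs⟩ := hvrt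
    obtain ⟨o, ho, _⟩ := shift hs
    have hout : ∀ e, BinTree.ValidPath t (rt ++ e) → rt ++ e ∉ M →
        ∃ d ∈ childEdges t M, d <+: rt ++ e := by
      intro e
      induction e using List.reverseRecOn with
      | nil => intro _ h; exact absurd hrM (by simpa using h)
      | append_singleton e b ih =>
        intro hv hnM
        rw [← List.append_assoc] at hv hnM ⊢
        by_cases hq' : rt ++ e ∈ M
        · exact ⟨(rt ++ e) ++ [b], ⟨hnM, hv, rt ++ e, hq', b, rfl⟩, List.prefix_rfl⟩
        · obtain ⟨d, hd, hpre⟩ := ih (validPath_of_prefix hv ⟨[b], rfl⟩) hq'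
          exact ⟨d, hd, hpre.trans ⟨[b], rfl⟩⟩
    rcases (childEdges t M).eq_empty_or_nonempty with hE | hE
    · have hMeq : M = {q | rt <+: q ∧ BinTree.ValidPath t q} := by
        ext q
        constructor
        · intro hq; exact ⟨(hroot q hq).1, hvalid q hq⟩
        · rintro ⟨⟨e, rfl⟩, hv⟩
          by_contra hnM
          obtain ⟨d, hd, _⟩ := hout e hv hnM
          rw [hE] at hd; exact hd
      refine ⟨o, o + 2 * (BinTree.node l r).size, 0, 0, ?_⟩
      rw [Set.Ico_self, Set.union_empty]
      ext k
      simp only [bpPositions, hMeq, Set.mem_setOf_eq, Set.mem_Ico]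
      constructor
      · rintro ⟨q, ⟨hq1, hq2⟩, hq3⟩
        exact (pos_full hs ho).mp ⟨q, hq1, hq2, hq3⟩
      · intro h
        obtain ⟨q, hq1, hq2, hq3⟩ := (pos_full hs ho).mpr h
        exact ⟨q, ⟨hq1, hq2⟩, hq3⟩
    · have h1c : (childEdges t M).ncard = 1 := by
        have h0 := (Set.ncard_pos hfin).mpr hE
        omega
      obtain ⟨c, hceq⟩ := Set.ncard_eq_one.mp h1c
      have hcE : c ∈ childEdges t M := by rw [hceq]; rfl
      obtain ⟨hcnM, hcv, pc, hpcM, b, hcb⟩ := hcE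
      have hrc : rt <+: c := by
        rw [hcb]; exact (hroot pc hpcM).1.trans ⟨[b], rfl⟩
      obtain ⟨l', r', hs'⟩ := hcv
      have hcv : BinTree.ValidPath t c := ⟨l', r', hs'⟩
      obtain ⟨o', ho', _⟩ := shift hs'
      have hMeq : ∀ q, q ∈ M ↔ (rt <+: q ∧ BinTree.ValidPath t q ∧ ¬ c <+: q) := by
        intro q
        constructor
        · intro hq
          refine ⟨(hroot q hq).1, hvalid q hq, fun hcq => ?_⟩
          exact hcnM ((hroot q hq).2 c hrc hcq hcv)
        · rintro ⟨⟨e, rfl⟩, hv, hnc⟩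
          by_contra hnM
          obtain ⟨d, hd, hpre⟩ := hout e hv hnM
          rw [hceq] at hd
          exact hnc ((Set.mem_singleton_iff.mp hd) ▸ hpre)
      have hsub : ∀ k, o' ≤ k ∧ k < o' + 2 * (BinTree.node l' r').size →
          o ≤ k ∧ k < o + 2 * (BinTree.node l r).size := by
        intro k hk
        obtain ⟨q, h1, hv2, h3⟩ := (pos_full hs' ho').mpr hk
        exact (pos_full hs ho).mp ⟨q, hrc.trans h1, hv2, h3⟩
      have hS' : 1 ≤ (BinTree.node l' r').size := by simp [BinTree.size]
      have hb1 : o ≤ o' := (hsub o' ⟨le_rfl, by omega⟩).1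
      have hb2 : o' + 2 * (BinTree.node l' r').size ≤ o + 2 * (BinTree.node l r).size := by
        have := hsub (o' + 2 * (BinTree.node l' r').size - 1) ⟨by omega, by omega⟩
        omega
      refine ⟨o, o', o' + 2 * (BinTree.node l' r').size, o + 2 * (BinTree.node l r).size, ?_⟩
      ext k
      simp only [bpPositions, Set.mem_setOf_eq, Set.mem_union, Set.mem_Ico]
      constructor
      · rintro ⟨q, hq, hidx⟩
        rw [hMeq] at hq
        obtain ⟨hpre, hv2, hnc⟩ := hq
        have hin := (pos_full hs ho).mp ⟨q, hpre, hv2, hidx⟩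
        have hnot : ¬ (o' ≤ k ∧ k < o' + 2 * (BinTree.node l' r').size) := by
          intro hk'
          obtain ⟨q', h1', h2', h3'⟩ := (pos_full hs' ho').mpr hk'
          exact hnc ((idx_inj h3' hidx) ▸ h1')
        omega
      · intro hk
        have hin : o ≤ k ∧ k < o + 2 * (BinTree.node l r).size := by omega
        obtain ⟨q, h1, hv2, h3⟩ := (pos_full hs ho).mpr hin
        refine ⟨q, (hMeq q).mpr ⟨h1, hv2, fun hcq => ?_⟩, h3⟩
        have := (pos_full hs' ho').mp ⟨q, hcq, hv2, h3⟩
        omega
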